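/- (Projective triple spread formula) Suppose U, V, W, Z are nonzero vectors that are linearly dependent (so the projective points [U], [V], [W], [Z] are coplanar), with a_Z ≠ 0 and with a_U·a_Z − b_{UZ}², a_V·a_Z − b_{VZ}², a_W·a_Z − b_{WZ}² all nonzero. Let R_u = S(ZV, ZW), R_v = S(ZU, ZW), R_w = S(ZU, ZV) be the projective spreads at Z. Then (R_u + R_v + R_w)² = 2(R_u² + R_v² + R_w²) + 4·R_u·R_v·R_w. -/

import Mathlib

/-- The projective quadrance between the projective points `[U]` and `[V]`. -/
def projQuadrance {F : Type*} [Field F] {M : Type*} [AddCommGroup M] [Module F M]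
    (B : LinearMap.BilinForm F M) (U V : M) : F :=
  1 - (B U V) ^ 2 / (B U U * B V V)

/-- The projective spread between the projective lines `WU` and `WV`
(the spread at the vertex `[W]`). -/
def projSpread {F : Type*} [Field F] {M : Type*} [AddCommGroup M] [Module F M]
    (B : LinearMap.BilinForm F M) (W U V : M) : F :=
  1 - (B W W * B U V - B U W * B V W) ^ 2 /
      ((B U U * B W W - (B U W) ^ 2) * (B V V * B W W - (B V W) ^ 2))

/-! Projecting `U, V, W` onto the `B`-orthogonal complement of `Z` turns the spreads at `[Z]`
into the quadrances between the projections `u, v, w`. The dependence of `U, V, W, Z` makes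
`u, v, w` linearly dependent, so their Gram determinant `D` vanishes, and the triple spread
formula is then the triple quad formula for `u, v, w`, a polynomial identity modulo `D`. -/
section

variable {F : Type*} [Field F] {M : Type*} [AddCommGroup M] [Module F M]
  (B : LinearMap.BilinForm F M)

theorem det_gram_eq_zero_of_not_linearIndependent {ι : Type*} [Fintype ι] [DecidableEq ι]
    {f : ι → M} (hf : ¬LinearIndependent F f) :
    (Matrix.of fun i j => B (f i) (f j)).det = 0 := by
  obtain ⟨g, hsum, i, hi⟩ := Fintype.not_linearIndependent_iff.mp hf
  refine Matrix.exists_vecMul_eq_zero_iff.mp ⟨g, fun h => hi (congrFun h i), funext fun j => ?_⟩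
  simpa [Matrix.vecMul, dotProduct, map_sum] using congrArg (B · (f j)) hsum

theorem projQuadrance_triple_formula (hB : B.IsSymm) {u v w : M}
    (hu : B u u ≠ 0) (hv : B v v ≠ 0) (hw : B w w ≠ 0)
    (hdet : (Matrix.of fun i j => B (![u, v, w] i) (![u, v, w] j)).det = 0) :
    (projQuadrance B v w + projQuadrance B u w + projQuadrance B u v) ^ 2 =
      2 * (projQuadrance B v w ^ 2 + projQuadrance B u w ^ 2 + projQuadrance B u v ^ 2) +
        4 * projQuadrance B v w * projQuadrance B u w * projQuadrance B u v := by
  simp only [Matrix.det_fin_three, Matrix.of_apply, Matrix.cons_val_zero, Matrix.cons_val_one,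
    Matrix.cons_val] at hdet
  rw [hB.eq v u, hB.eq w u, hB.eq w v] at hdet
  unfold projQuadrance
  field_simp
  -- the coefficient is `4 * B v w * B u w * B u v - D`, where `hdet : D = 0`
  linear_combination (2 * B v w * B u w * B u v - B u u * B v v * B w w + B u u * B v w ^ 2
    + B v v * B u w ^ 2 + B w w * B u v ^ 2) * hdet

/-- `a_Z` times the component of `X` orthogonal to `Z`; the scaling avoids dividing by `a_Z`. -/
def scaledRejection (Z : M) : M →ₗ[F] M :=
  B Z Z • LinearMap.id - (B.flip Z).smulRight Z

theorem scaledRejection_apply (Z X : M) : scaledRejection B Z X = B Z Z • X - B X Z • Z := rfl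

theorem scaledRejection_self (Z : M) : scaledRejection B Z Z = 0 := sub_self _

theorem apply_scaledRejection_scaledRejection (hB : B.IsSymm) (Z X Y : M) :
    B (scaledRejection B Z X) (scaledRejection B Z Y) =
      B Z Z * (B Z Z * B X Y - B X Z * B Y Z) := by
  simp only [scaledRejection_apply, map_sub, map_smul, LinearMap.sub_apply,
    LinearMap.smul_apply, smul_eq_mul]
  rw [hB.eq Z Y]
  ring

theorem apply_scaledRejection_self_ne_zero (hB : B.IsSymm) {Z X : M} (hZ : B Z Z ≠ 0)
    (hX : B X X * B Z Z - B X Z ^ 2 ≠ 0) :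
    B (scaledRejection B Z X) (scaledRejection B Z X) ≠ 0 := by
  rw [apply_scaledRejection_scaledRejection B hB, mul_comm (B Z Z) (B X X), ← sq]
  exact mul_ne_zero hZ hX

theorem projSpread_eq_projQuadrance_scaledRejection (hB : B.IsSymm) {Z : M} (hZ : B Z Z ≠ 0)
    (X Y : M) :
    projSpread B Z X Y = projQuadrance B (scaledRejection B Z X) (scaledRejection B Z Y) := by
  simp only [projQuadrance, apply_scaledRejection_scaledRejection B hB]
  rw [mul_pow, mul_mul_mul_comm, ← sq, mul_div_mul_left _ _ (pow_ne_zero 2 hZ), projSpread]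
  ring

theorem not_linearIndependent_scaledRejection {Z : M} (hZ : B Z Z ≠ 0) {U V W : M}
    {a b c d : F} (hne : a ≠ 0 ∨ b ≠ 0 ∨ c ≠ 0 ∨ d ≠ 0)
    (hrel : a • U + b • V + c • W + d • Z = 0) :
    ¬LinearIndependent F
      ![scaledRejection B Z U, scaledRejection B Z V, scaledRejection B Z W] := by
  have habc : a ≠ 0 ∨ b ≠ 0 ∨ c ≠ 0 := by
    by_contra! h
    obtain ⟨rfl, rfl, rfl⟩ := h
    have hd : d ≠ 0 := by simpa using hne
    simp only [zero_smul, zero_add, smul_eq_zero] at hrel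
    exact hZ (by simp [hrel.resolve_left hd])
  rw [Fintype.not_linearIndependent_iff]
  refine ⟨![a, b, c], ?_, ?_⟩
  · calc ∑ i, ![a, b, c] i • ![scaledRejection B Z U, scaledRejection B Z V,
            scaledRejection B Z W] i
        = scaledRejection B Z (a • U + b • V + c • W) := by simp [Fin.sum_univ_three]
      _ = 0 := by
        rw [eq_neg_of_add_eq_zero_left hrel, map_neg, map_smul, scaledRejection_self, smul_zero,
          neg_zero]
  · rcases habc with h | h | h
    exacts [⟨0, h⟩, ⟨1, h⟩, ⟨2, h⟩]

end

theorem projective_triple_spread_formula_general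
    {F : Type*} [Field F]
    {M : Type*} [AddCommGroup M] [Module F M]
    (B : LinearMap.BilinForm F M) (hsym : ∀ x y : M, B x y = B y x)
    (U V W Z : M)
    (hdep : ∃ a b c d : F, (a ≠ 0 ∨ b ≠ 0 ∨ c ≠ 0 ∨ d ≠ 0) ∧
      a • U + b • V + c • W + d • Z = 0)
    (haZ : B Z Z ≠ 0)
    (hdUZ : B U U * B Z Z - (B U Z) ^ 2 ≠ 0)
    (hdVZ : B V V * B Z Z - (B V Z) ^ 2 ≠ 0)
    (hdWZ : B W W * B Z Z - (B W Z) ^ 2 ≠ 0) :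
    (projSpread B Z V W + projSpread B Z U W + projSpread B Z U V) ^ 2 =
      2 * (projSpread B Z V W ^ 2 + projSpread B Z U W ^ 2 + projSpread B Z U V ^ 2) +
        4 * projSpread B Z V W * projSpread B Z U W * projSpread B Z U V := by
  obtain ⟨a, b, c, d, hne, hrel⟩ := hdep
  have hB : B.IsSymm := ⟨hsym⟩
  simp only [projSpread_eq_projQuadrance_scaledRejection B hB haZ]
  exact projQuadrance_triple_formula B hB
    (apply_scaledRejection_self_ne_zero B hB haZ hdUZ)
    (apply_scaledRejection_self_ne_zero B hB haZ hdVZ)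
    (apply_scaledRejection_self_ne_zero B hB haZ hdWZ)
    (det_gram_eq_zero_of_not_linearIndependent B
      (not_linearIndependent_scaledRejection B haZ hne hrel))

theorem projective_triple_spread_formula
    {F : Type*} [Field F] (hchar : (2 : F) ≠ 0)
    {M : Type*} [AddCommGroup M] [Module F M]
    (B : LinearMap.BilinForm F M) (hsym : ∀ x y : M, B x y = B y x)
    (U V W Z : M) (hU : U ≠ 0) (hV : V ≠ 0) (hW : W ≠ 0) (hZ : Z ≠ 0)
    (hdep : ∃ a b c d : F, (a ≠ 0 ∨ b ≠ 0 ∨ c ≠ 0 ∨ d ≠ 0) ∧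
      a • U + b • V + c • W + d • Z = 0)
    (haZ : B Z Z ≠ 0)
    (hdUZ : B U U * B Z Z - (B U Z) ^ 2 ≠ 0)
    (hdVZ : B V V * B Z Z - (B V Z) ^ 2 ≠ 0)
    (hdWZ : B W W * B Z Z - (B W Z) ^ 2 ≠ 0) :
    (projSpread B Z V W + projSpread B Z U W + projSpread B Z U V) ^ 2 =
      2 * (projSpread B Z V W ^ 2 + projSpread B Z U W ^ 2 + projSpread B Z U V ^ 2) +
        4 * projSpread B Z V W * projSpread B Z U W * projSpread B Z U V :=
  projective_triple_spread_formula_general B hsym U V W Z hdep haZ hdUZ hdVZ hdWZ
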